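/- (Policy gradient theorem, episodic finite-horizon case with terminal rewards) For a finite-horizon autoregressive policy π_θ over sequences of length T with zero intermediate rewards and deterministic transitions, the gradient of the expected terminal reward J(θ) = Σ_{s_1} π_θ(s_1|s_0) Q(s_0, s_1) satisfies ∇_θ J(θ) = Σ_{t=1}^{T} Σ_{S_{1:t-1}} Pr(S_{1:t-1} | s_0; π_θ) Σ_{s_t} ∇_θ π_θ(s_t | S_{1:t-1}) Q(S_{1:t-1}, s_t), provided that Q at terminal sequences (length T) does not depend on θ. -/

import Mathlib

/-!
Differentiate the Bellman recursion `V_{n+1}(S) = ∑ s, π(s | S) V_n(S ++ [s])` by the product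
rule. Differentiating `π` gives the `t = 0` term of the formula; differentiating `V_n` gives,
by induction, the formula from each one-step extension `S ++ [s]`, and weighting it by the
first step `π(s | S)` turns length-`t` path probabilities into length-`t + 1` ones.
-/

/-- Value of a prefix `S` with `n` steps remaining until the horizon:
zero intermediate rewards, terminal reward `D`, autoregressive policy `π`. -/
def storyVal {E : Type*} [Fintype E] (π : List E → E → ℝ) (D : List E → ℝ) :
    ℕ → List E → ℝ
  | 0, S => D S
  | n + 1, S => ∑ s, π S s * storyVal π D n (S ++ [s])

/-- `Pr(f | S; ρ)`: the probability that the policy `ρ`, started from the prefix `S`,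
continues it by `f`. -/
def pathProb {E R : Type*} [CommMonoid R] (ρ : List E → E → R) (S : List E) {t : ℕ}
    (f : Fin t → E) : R :=
  ∏ i : Fin t, ρ (S ++ (List.ofFn f).take i) (f i)

theorem pathProb_cons {E R : Type*} [CommMonoid R] (ρ : List E → E → R) (S : List E)
    {t : ℕ} (s : E) (f : Fin t → E) :
    pathProb ρ S (Fin.cons s f : Fin (t + 1) → E) = ρ S s * pathProb ρ (S ++ [s]) f := by
  simp [pathProb, Fin.prod_univ_succ, List.ofFn_succ]

theorem sum_pathProb_smul_succ {E R M : Type*} [Fintype E] [CommSemiring R]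
    [AddCommMonoid M] [Module R M] (ρ : List E → E → R) (g : List E → M) (S : List E)
    (t : ℕ) :
    ∑ f : Fin (t + 1) → E, pathProb ρ S f • g (S ++ List.ofFn f)
      = ∑ s, ρ S s • ∑ f : Fin t → E, pathProb ρ (S ++ [s]) f • g (S ++ [s] ++ List.ofFn f) := by
  rw [← (Fin.consEquiv fun _ : Fin (t + 1) => E).sum_comp, Fintype.sum_prod_type]
  simp only [Finset.smul_sum, smul_smul]
  refine Finset.sum_congr rfl fun s _ => Finset.sum_congr rfl fun f _ => ?_
  change pathProb ρ S (Fin.cons s f : Fin (t + 1) → E) • g (S ++ List.ofFn (Fin.cons s f)) = _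
  rw [pathProb_cons, List.ofFn_succ, Fin.cons_zero]
  simp only [Fin.cons_succ, List.append_assoc, List.singleton_append]

section Gradient

variable {E F : Type*} [Fintype E] [NormedAddCommGroup F] [NormedSpace ℝ F]
  {π : F → List E → E → ℝ} (D : List E → ℝ) {θ₀ : F}

theorem differentiableAt_storyVal (hπ : ∀ S s, DifferentiableAt ℝ (fun θ => π θ S s) θ₀) :
    ∀ n S, DifferentiableAt ℝ (fun θ => storyVal (π θ) D n S) θ₀
  | 0, _ => differentiableAt_const _
  | n + 1, S => DifferentiableAt.fun_sum fun s _ =>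
      (hπ S s).mul (differentiableAt_storyVal hπ n (S ++ [s]))

theorem fderiv_storyVal_succ (hπ : ∀ S s, DifferentiableAt ℝ (fun θ => π θ S s) θ₀)
    (n : ℕ) (S : List E) :
    fderiv ℝ (fun θ => storyVal (π θ) D (n + 1) S) θ₀
      = ∑ s, π θ₀ S s • fderiv ℝ (fun θ => storyVal (π θ) D n (S ++ [s])) θ₀
        + ∑ s, storyVal (π θ₀) D n (S ++ [s]) • fderiv ℝ (fun θ => π θ S s) θ₀ := by
  have hV := differentiableAt_storyVal D hπ n
  simp only [storyVal]
  rw [fderiv_fun_sum (u := Finset.univ)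
      (A := fun s θ => π θ S s * storyVal (π θ) D n (S ++ [s])) fun s _ => (hπ S s).mul (hV _),
    ← Finset.sum_add_distrib]
  exact Finset.sum_congr rfl fun s _ => fderiv_fun_mul (hπ S s) (hV _)

-- Stated from an arbitrary prefix `S`, so that the induction on the horizon goes through.
theorem fderiv_storyVal (hπ : ∀ S s, DifferentiableAt ℝ (fun θ => π θ S s) θ₀) :
    ∀ n S, fderiv ℝ (fun θ => storyVal (π θ) D n S) θ₀
      = ∑ t ∈ Finset.range n, ∑ f : Fin t → E, pathProb (π θ₀) S f •
          ∑ s, storyVal (π θ₀) D (n - (t + 1)) (S ++ List.ofFn f ++ [s]) •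
            fderiv ℝ (fun θ => π θ (S ++ List.ofFn f) s) θ₀
  | 0, _ => by simp [storyVal]
  | n + 1, S => by
    rw [fderiv_storyVal_succ D hπ, Finset.sum_range_succ']
    congr 1
    · simp only [fderiv_storyVal hπ n, Finset.smul_sum (s := Finset.range n)]
      rw [Finset.sum_comm]
      refine Finset.sum_congr rfl fun t _ => ?_
      rw [Nat.add_sub_add_right]
      exact (sum_pathProb_smul_succ _ (fun S' => ∑ s, storyVal (π θ₀) D (n - (t + 1))
        (S' ++ [s]) • fderiv ℝ (fun θ => π θ S' s) θ₀) _ _).symm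
    · simp [pathProb]

end Gradient

theorem policy_gradient_theorem_general {E : Type*} [Fintype E] {d : ℕ} (T : ℕ)
    (π : (Fin d → ℝ) → List E → E → ℝ) (D : List E → ℝ) (θ₀ : Fin d → ℝ)
    (hdiff : ∀ S s, DifferentiableAt ℝ (fun θ => π θ S s) θ₀) :
    fderiv ℝ (fun θ => storyVal (π θ) D T []) θ₀
      = ∑ t ∈ Finset.range T, ∑ f : Fin t → E,
          (∏ i : Fin t, π θ₀ ((List.ofFn f).take i.1) (f i)) •
            ∑ s : E, (storyVal (π θ₀) D (T - (t + 1)) (List.ofFn f ++ [s])) •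
              fderiv ℝ (fun θ => π θ (List.ofFn f) s) θ₀ := by
  simpa [pathProb] using fderiv_storyVal D hdiff T []

/-- Policy gradient theorem, episodic finite-horizon case with
terminal rewards: with zero intermediate rewards, deterministic transitions,
and a θ-independent terminal reward `D`,
`∇_θ J(θ) = ∑_{t=1}^{T} ∑_{S_{1:t-1}} Pr(S_{1:t-1}|s₀;π_θ)
   ∑_{s_t} ∇_θ π_θ(s_t | S_{1:t-1}) · Q(S_{1:t-1}, s_t)`,
where `Q(S_{1:t-1}, s_t) = v(S_{1:t})` is the value of the extended prefix. -/
theorem policy_gradient_theorem {E : Type*} [Fintype E] {d : ℕ} (T : ℕ)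
    (π : (Fin d → ℝ) → List E → E → ℝ) (D : List E → ℝ) (θ₀ : Fin d → ℝ)
    (hprob : ∀ θ S, (∀ s, 0 ≤ π θ S s) ∧ ∑ s, π θ S s = 1)
    (hdiff : ∀ S s, DifferentiableAt ℝ (fun θ => π θ S s) θ₀) :
    fderiv ℝ (fun θ => storyVal (π θ) D T []) θ₀
      = ∑ t ∈ Finset.range T, ∑ f : Fin t → E,
          (∏ i : Fin t, π θ₀ ((List.ofFn f).take i.1) (f i)) •
            ∑ s : E, (storyVal (π θ₀) D (T - (t + 1)) (List.ofFn f ++ [s])) •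
              fderiv ℝ (fun θ => π θ (List.ofFn f) s) θ₀ :=
  policy_gradient_theorem_general T π D θ₀ hdiff
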